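/- arXiv:0812.1468 — 4 statements merged into one kernel-verified Lean document; each statement's English description precedes it below -/
import Mathlib

section
/- Let {A, G, σ, α} be a crossed system where G is an abelian cancellable monoid, α is symmetric (α(s,t) = α(t,s) for all s,t ∈ G), and no α(s,t) is a zero divisor in A. Then an element x = Σ_{s∈G} a_s u_s lies in the center of A ⋊_α^σ G if and only if (i) a_s σ_s(a) = a a_s for all s ∈ G, a ∈ A, and (ii) each a_s is fixed by σ_t for every t ∈ G (i.e. a_s ∈ A^G). -/
/-!
Multiplying `x` by a monomial `b u_t` on either side and reading off the coefficient of
`u_{st}` (the only one that `s` contributes to, by cancellativity) turns centrality into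
`x_s σ_s(b) α(s,t) = b σ_t(x_s) α(t,s)` for all `s, t, b`. Taking `t = 1` gives (i); taking
`b = 1` and cancelling the symmetric, regular `α(s,t)` gives (ii). Conversely (i), (ii) and
symmetry make the double sums for `xy` and `yx` agree term by term.
-/

/-- The multiplication of the crossed product `A ⋊_α^σ G` of a monoid crossed
system: `(a u_s)(b u_t) = a σ_s(b) α(s,t) u_{st}`. -/
noncomputable def crossedMul {A : Type*} [Ring A] {G : Type*} [Monoid G]
    (σ : G → (A →+* A)) (α : G → G → A) (x y : G →₀ A) : G →₀ A :=
  x.sum fun s a => y.sum fun t b => Finsupp.single (s * t) (a * σ s b * α s t)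

theorem Finsupp.sum_single_mul_right_apply {G M N : Type*} [Mul G] [IsRightCancelMul G]
    [Zero M] [AddCommMonoid N] (x : G →₀ M) (c : G → M → N) (hc : ∀ s, c s 0 = 0)
    (s t : G) : (x.sum fun r a => Finsupp.single (r * t) (c r a)) (s * t) = c s (x s) := by
  classical
  rw [Finsupp.sum_apply, Finsupp.sum_eq_single s]
  · simp
  · intro r _ hrs
    exact Finsupp.single_eq_of_ne (fun h => hrs (mul_right_cancel h).symm)
  · simp [hc]

section CrossedMul

variable {A : Type*} [Ring A] {G : Type*} [Monoid G] (σ : G → (A →+* A)) (α : G → G → A)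

theorem crossedMul_single_right (x : G →₀ A) (t : G) (b : A) :
    crossedMul σ α x (Finsupp.single t b) =
      x.sum fun s a => Finsupp.single (s * t) (a * σ s b * α s t) := by
  unfold crossedMul
  refine Finsupp.sum_congr fun s _ => ?_
  rw [Finsupp.sum_single_index]
  simp

theorem crossedMul_single_left (y : G →₀ A) (t : G) (b : A) :
    crossedMul σ α (Finsupp.single t b) y =
      y.sum fun s a => Finsupp.single (t * s) (b * σ t a * α t s) := by
  unfold crossedMul
  rw [Finsupp.sum_single_index]
  simp

theorem crossedMul_single_right_apply [IsRightCancelMul G] (x : G →₀ A) (s t : G) (b : A) :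
    crossedMul σ α x (Finsupp.single t b) (s * t) = x s * σ s b * α s t := by
  rw [crossedMul_single_right]
  exact Finsupp.sum_single_mul_right_apply x _ (by simp) s t

end CrossedMul

section CommMonoid

variable {A : Type*} [Ring A] {G : Type*} [CommMonoid G] (σ : G → (A →+* A)) (α : G → G → A)

theorem crossedMul_single_left_apply [IsCancelMul G] (y : G →₀ A) (s t : G) (b : A) :
    crossedMul σ α (Finsupp.single t b) y (s * t) = b * σ t (y s) * α t s := by
  simp_rw [crossedMul_single_left, mul_comm t]
  exact Finsupp.sum_single_mul_right_apply y (fun r a => b * σ t a * α t r) (by simp) s t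

theorem coeff_eq_of_crossedMul_comm_single [IsCancelMul G] {x : G →₀ A} {t : G} {b : A}
    (h : crossedMul σ α x (Finsupp.single t b) = crossedMul σ α (Finsupp.single t b) x)
    (s : G) : x s * σ s b * α s t = b * σ t (x s) * α t s := by
  rw [← crossedMul_single_right_apply, ← crossedMul_single_left_apply, h]

theorem crossedMul_comm_of_coeff {x y : G →₀ A}
    (h : ∀ s t, x s * σ s (y t) * α s t = y t * σ t (x s) * α t s) :
    crossedMul σ α x y = crossedMul σ α y x := by
  unfold crossedMul
  rw [Finsupp.sum_comm]
  refine Finsupp.sum_congr fun s _ => Finsupp.sum_congr fun t _ => ?_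
  rw [mul_comm t s, h]

end CommMonoid

theorem center_crossed_product_abelian_cancellable_general
    {A : Type*} [Ring A] {G : Type*} [CommMonoid G] [IsCancelMul G]
    (σ : G → (A →+* A)) (α : G → G → A)
    (hσ1 : σ 1 = RingHom.id A)
    (hα1r : ∀ s, α s 1 = 1) (hα1l : ∀ s, α 1 s = 1)
    (hsym : ∀ s t, α s t = α t s)
    (hreg : ∀ s t, ∀ b : A, (α s t * b = 0 → b = 0) ∧ (b * α s t = 0 → b = 0))
    (x : G →₀ A) :
    (∀ y, crossedMul σ α x y = crossedMul σ α y x) ↔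
      ((∀ s a, x s * σ s a = a * x s) ∧ ∀ s t, σ t (x s) = x s) := by
  constructor
  · intro h
    have coeff s t b := coeff_eq_of_crossedMul_comm_single σ α (h (Finsupp.single t b)) s
    refine ⟨fun s a => by simpa [hσ1, hα1r, hα1l] using coeff s 1 a, fun s t => ?_⟩
    have hst : σ t (x s) * α s t = x s * α s t := by
      simpa [hsym t s] using (coeff s t 1).symm
    exact sub_eq_zero.mp ((hreg s t _).2 (by rw [sub_mul, hst, sub_self]))
  · rintro ⟨hcomm, hfix⟩ y
    exact crossedMul_comm_of_coeff σ α fun s t => by rw [hfix, hsym t s, hcomm]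

/-- if `G` is an abelian cancellable monoid, `α` is symmetric and no
`α(s,t)` is a zero divisor, then `x = Σ a_s u_s` is central in `A ⋊_α^σ G` iff
(i) `a_s σ_s(a) = a a_s` for all `s, a` and (ii) every `a_s` is fixed by all
`σ_t` (i.e. `a_s ∈ A^G`). -/
theorem center_crossed_product_abelian_cancellable
    {A : Type*} [Ring A] {G : Type*} [CommMonoid G] [IsCancelMul G]
    (σ : G → (A →+* A)) (α : G → G → A)
    (hσ1 : σ 1 = RingHom.id A)
    (hα1r : ∀ s, α s 1 = 1) (hα1l : ∀ s, α 1 s = 1)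
    (hcoc : ∀ s t r, α s t * α (s * t) r = σ s (α t r) * α s (t * r))
    (htw : ∀ s t a, σ s (σ t a) * α s t = α s t * σ (s * t) a)
    (hsym : ∀ s t, α s t = α t s)
    (hreg : ∀ s t, ∀ b : A, (α s t * b = 0 → b = 0) ∧ (b * α s t = 0 → b = 0))
    (x : G →₀ A) :
    (∀ y, crossedMul σ α x y = crossedMul σ α y x) ↔
      ((∀ s a, x s * σ s a = a * x s) ∧ ∀ s t, σ t (x s) = x s) :=
  center_crossed_product_abelian_cancellable_general σ α hσ1 hα1r hα1l hsym hreg x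
end

section
/- Let A ⋊_α^σ G be a category crossed product. The commutant of A = ⊕_e A_e u_e in A ⋊_α^σ G equals the set of elements Σ_{s∈G} a_s u_s such that a_s = 0 whenever d(s) ≠ c(s), and a_s σ_s(a) = a a_s for all s with d(s) = c(s) and all a ∈ A_{d(s)}. -/
open CategoryTheory

/-- The type of morphisms of a category `G`, bundled with domain and codomain. -/
abbrev CMor (G : Type*) [Category G] := Σ e f : G, e ⟶ f

/-- Transport along an equality of objects, as a ring homomorphism. -/
def castRH {G : Type*} (A : G → Type*) [∀ e, Ring (A e)]
    {e f : G} (h : e = f) : A e →+* A f := by subst h; exact RingHom.id _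

/-- The carrier of the category crossed product `A ⋊_α^σ G`: finitely supported
formal sums `Σ_s a_s u_s` with `a_s ∈ A_{c(s)}`. -/
abbrev CP {G : Type*} [Category G] (A : G → Type*) [∀ e, Ring (A e)] :=
  Π₀ p : CMor G, A p.2.1

open Classical in
/-- The multiplication of the category crossed product:
`(a u_s)(b u_t) = a σ_s(b) α(s,t) u_{st}` when `d(s) = c(t)`, else `0`. -/
noncomputable def catMul {G : Type*} [Category G] {A : G → Type*} [∀ e, Ring (A e)]
    (σ : ∀ e f : G, (e ⟶ f) → (A e →+* A f))
    (α : ∀ e f g : G, (f ⟶ g) → (e ⟶ f) → A g)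
    (x y : CP A) : CP A :=
  x.sum fun p a => y.sum fun q b =>
    if h : q.2.1 = p.1 then
      DFinsupp.single (⟨q.1, p.2.1, (q.2.2 ≫ eqToHom h) ≫ p.2.2⟩ : CMor G)
        (a * σ p.1 p.2.1 p.2.2 (castRH A h b) * α q.1 p.1 p.2.1 p.2.2 (q.2.2 ≫ eqToHom h))
    else 0

open Classical in
/-- `a u_s`, the formal sum supported on a single morphism. -/
noncomputable def catSingle {G : Type*} [Category G] {A : G → Type*} [∀ e, Ring (A e)]
    (p : CMor G) (a : A p.2.1) : CP A := DFinsupp.single p a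

/-!
Multiplication by `a u_e` (with `u_e` at the identity of `e`) acts coefficientwise, thanks to the
unit conditions on `σ` and `α`: on the right it sends `a_s` to `a_s σ_s(a)` if `d(s) = e` and to `0`
otherwise; on the left it sends `a_s` to `a a_s` if `c(s) = e` and to `0` otherwise. Comparing
coefficients, `a = 1` at `e = c(s)` forces `a_s = 0` off the loops, and on a loop `s` the two
coefficients are exactly `a_s σ_s(a)` and `a a_s`.
-/

@[simp]
lemma castRH_rfl {G : Type*} (A : G → Type*) [∀ e, Ring (A e)] {e : G} :
    castRH A (rfl : e = e) = RingHom.id (A e) := rfl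

lemma DFinsupp.sum_single_eq_mapRange {ι : Type*} [DecidableEq ι] {β₁ β₂ : ι → Type*}
    [∀ i, Zero (β₁ i)] [∀ i (b : β₁ i), Decidable (b ≠ 0)] [∀ i, AddCommMonoid (β₂ i)]
    (f : ∀ i, β₁ i → β₂ i) (hf : ∀ i, f i 0 = 0) (x : Π₀ i, β₁ i) :
    (x.sum fun i b => DFinsupp.single i (f i b)) = x.mapRange f hf := by
  ext j
  rw [DFinsupp.sum_apply, DFinsupp.mapRange_apply, DFinsupp.sum, Finset.sum_eq_single j]
  · exact DFinsupp.single_eq_same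
  · intro i _ hij
    exact DFinsupp.single_eq_of_ne hij.symm
  · intro hj
    rw [DFinsupp.notMem_support_iff.mp hj, hf, DFinsupp.single_eq_same]

section CrossedProduct

variable {G : Type*} [Category G] {A : G → Type*} [∀ e, Ring (A e)]
  (σ : ∀ e f : G, (e ⟶ f) → (A e →+* A f)) (α : ∀ e f g : G, (f ⟶ g) → (e ⟶ f) → A g)

open Classical in
lemma catMul_catSingle_id (hα1r : ∀ (e f : G) (s : e ⟶ f), α e e f s (𝟙 e) = 1)
    (x : CP A) (e : G) (a : A e) :
    catMul σ α x (catSingle ⟨e, e, 𝟙 e⟩ a) = x.mapRange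
      (fun r b => if h : r.1 = e then b * σ r.1 r.2.1 r.2.2 (castRH A h.symm a) else 0)
      (fun r => by split <;> simp) := by
  unfold catMul catSingle
  rw [← DFinsupp.sum_single_eq_mapRange]
  congr 1
  ext ⟨d, c, s⟩ b : 2
  rw [DFinsupp.sum_single_index (by simp)]
  by_cases hde : e = d
  · subst hde
    simp [hα1r]
    rw [Category.id_comp, Category.id_comp]
  · simp [hde, Ne.symm hde]

open Classical in
lemma catSingle_id_catMul (hσ1 : ∀ e : G, σ e e (𝟙 e) = RingHom.id (A e))
    (hα1l : ∀ (e f : G) (s : e ⟶ f), α e f f (𝟙 f) s = 1)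
    (x : CP A) (e : G) (a : A e) :
    catMul σ α (catSingle ⟨e, e, 𝟙 e⟩ a) x = x.mapRange
      (fun r b => if h : r.2.1 = e then castRH A h.symm a * b else 0)
      (fun r => by split <;> simp) := by
  unfold catMul catSingle
  rw [← DFinsupp.sum_single_eq_mapRange, DFinsupp.sum_single_index (by simp)]
  congr 1
  ext ⟨d, c, s⟩ b : 2
  by_cases hce : c = e
  · subst hce
    simp [hσ1, hα1l]
    rw [Category.comp_id, Category.comp_id]
  · simp [hce]

end CrossedProduct

theorem commutant_coefficient_ring_general
    {G : Type*} [CategoryTheory.Category G] {A : G → Type*} [∀ e, Ring (A e)]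
    (σ : ∀ e f : G, (e ⟶ f) → (A e →+* A f))
    (α : ∀ e f g : G, (f ⟶ g) → (e ⟶ f) → A g)
    (hσ1 : ∀ e : G, σ e e (𝟙 e) = RingHom.id (A e))
    (hα1r : ∀ (e f : G) (s : e ⟶ f), α e e f s (𝟙 e) = 1)
    (hα1l : ∀ (e f : G) (s : e ⟶ f), α e f f (𝟙 f) s = 1)
    (x : CP A) :
    (∀ (e : G) (a : A e),
        catMul σ α x (catSingle (A := A) ⟨e, e, 𝟙 e⟩ a)
          = catMul σ α (catSingle (A := A) ⟨e, e, 𝟙 e⟩ a) x) ↔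
      ((∀ p : CMor G, p.1 ≠ p.2.1 → x p = 0) ∧
        ∀ (e : G) (s : e ⟶ e) (a : A e),
          x ⟨e, e, s⟩ * σ e e s a = a * x ⟨e, e, s⟩) := by
  simp only [DFinsupp.ext_iff, catMul_catSingle_id σ α hα1r,
    catSingle_id_catMul σ α hσ1 hα1l, DFinsupp.mapRange_apply]
  constructor
  · intro hx
    refine ⟨fun ⟨d, c, s⟩ hdc => ?_, fun e s a => ?_⟩
    · simpa [hdc] using (hx c 1 ⟨d, c, s⟩).symm
    · simpa using hx e a ⟨e, e, s⟩
  · rintro ⟨hoff, hdiag⟩ e a ⟨d, c, s⟩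
    by_cases hdc : d = c
    · subst hdc
      by_cases hde : d = e
      · subst hde
        simpa using hdiag d s a
      · simp [hde]
    · simp [hoff ⟨d, c, s⟩ hdc]

/-- the commutant of the coefficient ring `A = ⊕_e A_e u_e` in a
category crossed product `A ⋊_α^σ G` consists precisely of the elements
`Σ a_s u_s` with `a_s = 0` whenever `d(s) ≠ c(s)` and
`a_s σ_s(a) = a a_s` for all `s` with `d(s) = c(s)` and all `a ∈ A_{d(s)}`. -/
theorem commutant_coefficient_ring
    {G : Type*} [CategoryTheory.Category G] {A : G → Type*} [∀ e, Ring (A e)]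
    (σ : ∀ e f : G, (e ⟶ f) → (A e →+* A f))
    (α : ∀ e f g : G, (f ⟶ g) → (e ⟶ f) → A g)
    (hσ1 : ∀ e : G, σ e e (𝟙 e) = RingHom.id (A e))
    (hα1r : ∀ (e f : G) (s : e ⟶ f), α e e f s (𝟙 e) = 1)
    (hα1l : ∀ (e f : G) (s : e ⟶ f), α e f f (𝟙 f) s = 1)
    (hcoc : ∀ (e f g h : G) (s : g ⟶ h) (t : f ⟶ g) (r : e ⟶ f),
      α f g h s t * α e f h (t ≫ s) r = σ g h s (α e f g t r) * α e g h s (r ≫ t))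
    (htw : ∀ (e f g : G) (s : f ⟶ g) (t : e ⟶ f) (a : A e),
      σ f g s (σ e f t a) * α e f g s t = α e f g s t * σ e g (t ≫ s) a)
    (x : CP A) :
    (∀ (e : G) (a : A e),
        catMul σ α x (catSingle (A := A) ⟨e, e, 𝟙 e⟩ a)
          = catMul σ α (catSingle (A := A) ⟨e, e, 𝟙 e⟩ a) x) ↔
      ((∀ p : CMor G, p.1 ≠ p.2.1 → x p = 0) ∧
        ∀ (e : G) (s : e ⟶ e) (a : A e),
          x ⟨e, e, s⟩ * σ e e s a = a * x ⟨e, e, s⟩) :=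
  commutant_coefficient_ring_general σ α hσ1 hα1r hα1l x
end

section
/- Let A ⋊_α^σ G be a groupoid crossed product with G a groupoid having finitely many objects, each A_e commutative, and such that for every morphism s, the element α(s, s⁻¹) is not a zero divisor in A_{c(s)}. Then every nonzero twosided ideal of A ⋊_α^σ G has nonzero intersection with the commutant of A in A ⋊_α^σ G. -/
open CategoryTheory

/-- `I` is a twosided ideal of the category crossed product `A ⋊_α^σ G`. -/
def IsCrossedIdeal {G : Type*} [Category G] {A : G → Type*} [∀ e, Ring (A e)]
    (σ : ∀ e f : G, (e ⟶ f) → (A e →+* A f))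
    (α : ∀ e f g : G, (f ⟶ g) → (e ⟶ f) → A g)
    (I : Set (CP A)) : Prop :=
  (0 : CP A) ∈ I ∧ (∀ x y, x ∈ I → y ∈ I → x + y ∈ I) ∧ (∀ x, x ∈ I → -x ∈ I) ∧
    ∀ x r, x ∈ I → catMul σ α r x ∈ I ∧ catMul σ α x r ∈ I

/-!
Take a nonzero `x ∈ I` of minimal support and a morphism `s : d ⟶ c` in its support. Then
`y = x · u_{s⁻¹}` lies in `I`, its support is no larger than that of `x`, and its coefficient at
`𝟙 c` is `x_s α(s, s⁻¹) ≠ 0`. For `a ∈ A_e` the commutator `y · a u_e - a u_e · y` lies in `I`,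
is supported inside the support of `y`, and vanishes at every identity morphism because `A_c` is
commutative and `σ_{𝟙 c} = id`. So its support is strictly smaller than that of `x`, and by
minimality it is zero.
-/

@[simp] lemma castRH_refl {G : Type*} (A : G → Type*) [∀ e, Ring (A e)] {e : G} (a : A e) :
    castRH A (rfl : e = e) a = a := rfl

namespace CMor

section

variable {G : Type*} [Category G]

abbrev id (e : G) : CMor G := ⟨e, e, 𝟙 e⟩

abbrev comp (q p : CMor G) (h : q.2.1 = p.1) : CMor G :=
  ⟨q.1, p.2.1, (q.2.2 ≫ eqToHom h) ≫ p.2.2⟩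

lemma id_comp (e : G) (p : CMor G) (h : (id e).2.1 = p.1) : (id e).comp p h = p := by
  obtain ⟨d, c, m⟩ := p
  obtain rfl : e = d := h
  simp [id, comp]

lemma comp_id (q : CMor G) (e : G) (h : q.2.1 = (id e).1) : q.comp (id e) h = q := by
  obtain ⟨d, c, m⟩ := q
  obtain rfl : c = e := h
  simp [id, comp]

end

section

variable {G : Type*} [Groupoid G]

lemma comp_left_cancel {q p p' : CMor G} {h : q.2.1 = p.1}
    {h' : q.2.1 = p'.1} (hpp' : q.comp p h = q.comp p' h') : p = p' := by
  obtain ⟨a, b, m⟩ := q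
  obtain ⟨b₁, c, n⟩ := p
  obtain ⟨b₂, c', n'⟩ := p'
  obtain rfl : b = b₁ := h
  obtain rfl : b = b₂ := h'
  simp only [comp, eqToHom_refl, Category.comp_id, Sigma.mk.inj_iff, heq_eq_eq, true_and] at hpp'
  obtain ⟨rfl, hn⟩ := hpp'
  simp only [heq_eq_eq, cancel_epi] at hn
  rw [hn]

lemma comp_right_cancel {q q' p : CMor G} {h : q.2.1 = p.1}
    {h' : q'.2.1 = p.1} (hqq' : q.comp p h = q'.comp p h') : q = q' := by
  obtain ⟨a, b, m⟩ := q
  obtain ⟨a', b', m'⟩ := q'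
  obtain ⟨c, d, n⟩ := p
  obtain rfl : b = c := h
  obtain rfl : b' = b := h'
  simp only [comp, eqToHom_refl, Category.comp_id, Sigma.mk.inj_iff] at hqq'
  obtain ⟨rfl, hm⟩ := hqq'
  simp only [heq_eq_eq, Sigma.mk.inj_iff, true_and, cancel_mono] at hm
  rw [hm]

end

end CMor

section CategoryCrossedProduct

open Classical

variable {G : Type*} [Category G] {A : G → Type*} [∀ e, Ring (A e)]
  (σ : ∀ e f : G, (e ⟶ f) → (A e →+* A f))
  (α : ∀ e f g : G, (f ⟶ g) → (e ⟶ f) → A g)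

lemma catMul_catSingle (x : CP A) (q : CMor G) (b : A q.2.1) :
    catMul σ α x (catSingle q b) = ∑ p ∈ x.support,
      if h : q.2.1 = p.1 then
        catSingle (q.comp p h)
          (x p * σ p.1 p.2.1 p.2.2 (castRH A h b) * α q.1 p.1 p.2.1 p.2.2 (q.2.2 ≫ eqToHom h))
      else 0 := by
  unfold catMul
  rw [DFinsupp.sum]
  refine Finset.sum_congr rfl fun p _ => ?_
  rw [catSingle, DFinsupp.sum_single_index]
  · rfl
  · split <;> simp

lemma catSingle_catMul (p : CMor G) (a : A p.2.1) (y : CP A) :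
    catMul σ α (catSingle p a) y = ∑ q ∈ y.support,
      if h : q.2.1 = p.1 then
        catSingle (q.comp p h)
          (a * σ p.1 p.2.1 p.2.2 (castRH A h (y q)) * α q.1 p.1 p.2.1 p.2.2 (q.2.2 ≫ eqToHom h))
      else 0 := by
  unfold catMul
  rw [catSingle, DFinsupp.sum_single_index]
  · rfl
  · exact Finset.sum_eq_zero fun q _ => by dsimp only; split <;> simp

variable {σ α}

lemma exists_comp_of_mem_support_catMul_catSingle {x : CP A} {q : CMor G} {b : A q.2.1}
    {r : CMor G} (hr : r ∈ (catMul σ α x (catSingle q b)).support) :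
    ∃ p ∈ x.support, ∃ h : q.2.1 = p.1, q.comp p h = r := by
  rw [DFinsupp.mem_support_iff, catMul_catSingle, DFinsupp.finsetSum_apply] at hr
  obtain ⟨p, hp, hpr⟩ := Finset.exists_ne_zero_of_sum_ne_zero hr
  split_ifs at hpr with h
  · exact ⟨p, hp, h, by_contra fun hne => hpr (DFinsupp.single_eq_of_ne (Ne.symm hne))⟩
  · exact absurd rfl hpr

lemma exists_comp_of_mem_support_catSingle_catMul {p : CMor G} {a : A p.2.1} {y : CP A}
    {r : CMor G} (hr : r ∈ (catMul σ α (catSingle p a) y).support) :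
    ∃ q ∈ y.support, ∃ h : q.2.1 = p.1, q.comp p h = r := by
  rw [DFinsupp.mem_support_iff, catSingle_catMul, DFinsupp.finsetSum_apply] at hr
  obtain ⟨q, hq, hqr⟩ := Finset.exists_ne_zero_of_sum_ne_zero hr
  split_ifs at hqr with h
  · exact ⟨q, hq, h, by_contra fun hne => hqr (DFinsupp.single_eq_of_ne (Ne.symm hne))⟩
  · exact absurd rfl hqr

lemma card_support_catMul_catSingle_le (x : CP A) (q : CMor G) (b : A q.2.1) :
    (catMul σ α x (catSingle q b)).support.card ≤ x.support.card := by
  calc _ ≤ (x.support.image fun p => if h : q.2.1 = p.1 then q.comp p h else p).card := by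
        refine Finset.card_le_card fun r hr => ?_
        obtain ⟨p, hp, h, rfl⟩ := exists_comp_of_mem_support_catMul_catSingle hr
        exact Finset.mem_image.2 ⟨p, hp, dif_pos h⟩
    _ ≤ x.support.card := Finset.card_image_le

lemma support_catMul_catSingle_id_subset (x : CP A) (e : G) (a : A e) :
    (catMul σ α x (catSingle (CMor.id e) a)).support ⊆ x.support := by
  intro r hr
  obtain ⟨p, hp, h, rfl⟩ := exists_comp_of_mem_support_catMul_catSingle hr
  rwa [CMor.id_comp]

lemma support_catSingle_id_catMul_subset (e : G) (a : A e) (y : CP A) :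
    (catMul σ α (catSingle (CMor.id e) a) y).support ⊆ y.support := by
  intro r hr
  obtain ⟨q, hq, h, rfl⟩ := exists_comp_of_mem_support_catSingle_catMul hr
  rwa [CMor.comp_id]

end CategoryCrossedProduct

section GroupoidCrossedProduct

open Classical

variable {G : Type*} [Groupoid G] {A : G → Type*}

section Ring

variable [∀ e, Ring (A e)]
  (σ : ∀ e f : G, (e ⟶ f) → (A e →+* A f))
  (α : ∀ e f g : G, (f ⟶ g) → (e ⟶ f) → A g)

lemma catMul_catSingle_apply_comp (x : CP A) (q p : CMor G) (h : q.2.1 = p.1)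
    (b : A q.2.1) :
    catMul σ α x (catSingle q b) (q.comp p h)
      = x p * σ p.1 p.2.1 p.2.2 (castRH A h b) * α q.1 p.1 p.2.1 p.2.2 (q.2.2 ≫ eqToHom h) := by
  rw [catMul_catSingle, DFinsupp.finsetSum_apply, Finset.sum_eq_single p]
  · rw [dif_pos h]
    exact DFinsupp.single_eq_same
  · intro p' _ hp'
    split_ifs with h'
    · exact DFinsupp.single_eq_of_ne fun heq => hp' (CMor.comp_left_cancel heq).symm
    · rfl
  · intro hp
    rw [DFinsupp.notMem_support_iff.1 hp, dif_pos h, catSingle, DFinsupp.single_eq_same]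
    simp

lemma catSingle_catMul_apply_comp (p : CMor G) (a : A p.2.1) (y : CP A) (q : CMor G)
    (h : q.2.1 = p.1) :
    catMul σ α (catSingle p a) y (q.comp p h)
      = a * σ p.1 p.2.1 p.2.2 (castRH A h (y q)) * α q.1 p.1 p.2.1 p.2.2 (q.2.2 ≫ eqToHom h) := by
  rw [catSingle_catMul, DFinsupp.finsetSum_apply, Finset.sum_eq_single q]
  · rw [dif_pos h]
    exact DFinsupp.single_eq_same
  · intro q' _ hq'
    split_ifs with h'
    · exact DFinsupp.single_eq_of_ne fun heq => hq' (CMor.comp_right_cancel heq).symm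
    · rfl
  · intro hq
    rw [DFinsupp.notMem_support_iff.1 hq, dif_pos h, catSingle, DFinsupp.single_eq_same]
    simp

lemma catMul_catSingle_inv_apply_id (x : CP A) {d c : G} (s : d ⟶ c) (b : A d) :
    catMul σ α x (catSingle ⟨c, d, Groupoid.inv s⟩ b) (CMor.id c)
      = x ⟨d, c, s⟩ * σ d c s b * α c d c s (Groupoid.inv s) := by
  have key := catMul_catSingle_apply_comp σ α x ⟨c, d, Groupoid.inv s⟩ ⟨d, c, s⟩ rfl b
  have hid : (Groupoid.inv s ≫ eqToHom rfl) ≫ s = 𝟙 c := by simp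
  dsimp only [CMor.comp] at key
  rw [hid] at key
  simp only [castRH_refl, eqToHom_refl, Category.comp_id] at key
  exact key

end Ring

variable [∀ e, CommRing (A e)]
  {σ : ∀ e f : G, (e ⟶ f) → (A e →+* A f)}
  {α : ∀ e f g : G, (f ⟶ g) → (e ⟶ f) → A g}

lemma catMul_catSingle_id_comm_apply_id (hσ1 : ∀ e : G, σ e e (𝟙 e) = RingHom.id (A e))
    (x : CP A) (e : G) (a : A e) (c : G) :
    catMul σ α x (catSingle (CMor.id e) a) (CMor.id c)
      = catMul σ α (catSingle (CMor.id e) a) x (CMor.id c) := by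
  by_cases hec : e = c
  · subst hec
    have hr := catMul_catSingle_apply_comp σ α x (CMor.id e) (CMor.id e) rfl a
    have hl := catSingle_catMul_apply_comp σ α (CMor.id e) a x (CMor.id e) rfl
    have hid : (𝟙 e ≫ eqToHom rfl) ≫ 𝟙 e = 𝟙 e := by simp
    dsimp only [CMor.comp] at hr hl
    rw [hid] at hr hl
    rw [hr, hl, hσ1]
    simp [mul_comm]
  · have hr : CMor.id c ∉ (catMul σ α x (catSingle (CMor.id e) a)).support := fun hmem => by
      obtain ⟨p, -, h, hp⟩ := exists_comp_of_mem_support_catMul_catSingle hmem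
      exact hec (congrArg Sigma.fst hp)
    have hl : CMor.id c ∉ (catMul σ α (catSingle (CMor.id e) a) x).support := fun hmem => by
      obtain ⟨q, -, h, hq⟩ := exists_comp_of_mem_support_catSingle_catMul hmem
      exact hec (congrArg (fun r => r.2.1) hq)
    rw [DFinsupp.notMem_support_iff.1 hr, DFinsupp.notMem_support_iff.1 hl]

lemma card_support_catMul_catSingle_id_sub_lt (hσ1 : ∀ e : G, σ e e (𝟙 e) = RingHom.id (A e))
    {x : CP A} {c : G} (hx : x (CMor.id c) ≠ 0) (e : G) (a : A e) :
    (catMul σ α x (catSingle (CMor.id e) a) - catMul σ α (catSingle (CMor.id e) a) x).support.card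
      < x.support.card := by
  refine (Finset.card_le_card fun r hr => ?_).trans_lt
    (Finset.card_erase_lt_of_mem (DFinsupp.mem_support_iff.2 hx))
  rw [DFinsupp.mem_support_iff, DFinsupp.sub_apply, sub_ne_zero] at hr
  refine Finset.mem_erase.2 ⟨?_, ?_⟩
  · rintro rfl
    exact hr (catMul_catSingle_id_comm_apply_id hσ1 x e a c)
  · by_contra hrx
    have hr' : catMul σ α x (catSingle (CMor.id e) a) r = 0 := DFinsupp.notMem_support_iff.1
      fun h => hrx (support_catMul_catSingle_id_subset x e a h)
    have hl' : catMul σ α (catSingle (CMor.id e) a) x r = 0 := DFinsupp.notMem_support_iff.1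
      fun h => hrx (support_catSingle_id_catMul_subset e a x h)
    exact hr (hr'.trans hl'.symm)

end GroupoidCrossedProduct

theorem ideal_meets_commutant_general
    {G : Type*} [Groupoid G] {A : G → Type*} [∀ e, CommRing (A e)]
    (σ : ∀ e f : G, (e ⟶ f) → (A e →+* A f))
    (α : ∀ e f g : G, (f ⟶ g) → (e ⟶ f) → A g)
    (hσ1 : ∀ e : G, σ e e (𝟙 e) = RingHom.id (A e))
    (hreg : ∀ (e f : G) (s : e ⟶ f) (b : A f),
      (α f e f s (Groupoid.inv s) * b = 0 → b = 0) ∧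
        (b * α f e f s (Groupoid.inv s) = 0 → b = 0)) :
    ∀ I : Set (CP A), IsCrossedIdeal σ α I → (∃ x ∈ I, x ≠ 0) →
      ∃ x ∈ I, x ≠ 0 ∧
        ∀ (e : G) (a : A e),
          catMul σ α x (catSingle (A := A) ⟨e, e, 𝟙 e⟩ a)
            = catMul σ α (catSingle (A := A) ⟨e, e, 𝟙 e⟩ a) x := by
  classical
  rintro I ⟨-, hadd, hneg, hmul⟩ hI
  obtain ⟨x, ⟨hxI, hx0⟩, hmin⟩ :=
    (measure fun x : CP A => x.support.card).wf.has_min {x | x ∈ I ∧ x ≠ 0} hI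
  obtain ⟨⟨d, c, s⟩, hs⟩ := Finset.nonempty_iff_ne_empty.2 (DFinsupp.support_eq_empty.not.2 hx0)
  set y := catMul σ α x (catSingle ⟨c, d, Groupoid.inv s⟩ 1)
  have hyI : y ∈ I := (hmul x _ hxI).2
  have hy : y (CMor.id c) ≠ 0 := by
    rw [catMul_catSingle_inv_apply_id, map_one, mul_one]
    exact fun h => DFinsupp.mem_support_iff.1 hs ((hreg d c s _).2 h)
  refine ⟨y, hyI, fun h => hy (by rw [h, DFinsupp.zero_apply]), fun e a => by_contra fun hne => ?_⟩
  have hzI :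
      catMul σ α y (catSingle (CMor.id e) a) - catMul σ α (catSingle (CMor.id e) a) y ∈ I := by
    rw [sub_eq_add_neg]
    exact hadd _ _ (hmul y _ hyI).2 (hneg _ (hmul y _ hyI).1)
  exact hmin _ ⟨hzI, sub_ne_zero.2 hne⟩ <|
    (card_support_catMul_catSingle_id_sub_lt hσ1 hy e a).trans_le
      (card_support_catMul_catSingle_le x _ _)

/-- in a groupoid crossed product `A ⋊_α^σ G` (finitely many
objects, each `A_e` commutative, each `α(s, s⁻¹)` not a zero divisor), every
nonzero twosided ideal meets the commutant of `A` nontrivially. -/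
theorem ideal_meets_commutant
    {G : Type*} [Groupoid G] [Finite G] {A : G → Type*} [∀ e, CommRing (A e)]
    (σ : ∀ e f : G, (e ⟶ f) → (A e →+* A f))
    (α : ∀ e f g : G, (f ⟶ g) → (e ⟶ f) → A g)
    (hσ1 : ∀ e : G, σ e e (𝟙 e) = RingHom.id (A e))
    (hα1r : ∀ (e f : G) (s : e ⟶ f), α e e f s (𝟙 e) = 1)
    (hα1l : ∀ (e f : G) (s : e ⟶ f), α e f f (𝟙 f) s = 1)
    (hcoc : ∀ (e f g h : G) (s : g ⟶ h) (t : f ⟶ g) (r : e ⟶ f),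
      α f g h s t * α e f h (t ≫ s) r = σ g h s (α e f g t r) * α e g h s (r ≫ t))
    (htw : ∀ (e f g : G) (s : f ⟶ g) (t : e ⟶ f) (a : A e),
      σ f g s (σ e f t a) * α e f g s t = α e f g s t * σ e g (t ≫ s) a)
    (hreg : ∀ (e f : G) (s : e ⟶ f) (b : A f),
      (α f e f s (Groupoid.inv s) * b = 0 → b = 0) ∧
        (b * α f e f s (Groupoid.inv s) = 0 → b = 0)) :
    ∀ I : Set (CP A), IsCrossedIdeal σ α I → (∃ x ∈ I, x ≠ 0) →
      ∃ x ∈ I, x ≠ 0 ∧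
        ∀ (e : G) (a : A e),
          catMul σ α x (catSingle (A := A) ⟨e, e, 𝟙 e⟩ a)
            = catMul σ α (catSingle (A := A) ⟨e, e, 𝟙 e⟩ a) x :=
  ideal_meets_commutant_general σ α hσ1 hreg
end

section
/- Let A ⋊_α^σ G be a groupoid crossed product (G a groupoid with finitely many objects) such that each α(s,t) lies in the center of A_{c(s)} and is not a zero divisor. Let N = ∪_e N_e be a normal subgroupoid of G (N_e a subgroup of G_e with s N_{d(s)} = N_{c(s)} s for all s) such that σ_n = id_{A_{c(n)}} for all n ∈ N and α(s,t) = 1_{A_{c(s)}} whenever s ∈ N or t ∈ N. If I is the twosided ideal of A ⋊_α^σ G generated by an element Σ_{s∈G} a_s u_s with a_s = 0 whenever s ∉ ∪_e N_e and Σ_{s∈N_e} a_s = 0 for every object e, then A ∩ I = {0}. -/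
open CategoryTheory

/-! The coset sums `cosetSum N u z = Σ_{n ∈ N_{d(u)}} z_{u n}` are the coefficients of the image
of `z` in `A ⋊ G/N`. Since `σ` and `α` are trivial on `N` and `N` is normal, multiplying `z` by
`a u_s` on either side acts on each coset sum through a single coset sum of `z`, so the elements
all of whose coset sums vanish form an ideal. It contains the generator, because its support lies
in `N` and its sum over each `N_e` vanishes; and an element of `A` lies in it only if it is zero,
since the coset sum at `1_e` of such an element is its coefficient at `1_e`. -/

namespace CategoryCrossedProduct

open Classical

section Category

variable {G : Type*} [Category G] {A : G → Type*} [∀ e, Ring (A e)]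
  (σ : ∀ e f : G, (e ⟶ f) → (A e →+* A f)) (α : ∀ e f g : G, (f ⟶ g) → (e ⟶ f) → A g)

lemma catMul_add_left (x x' y : CP A) :
    catMul σ α (x + x') y = catMul σ α x y + catMul σ α x' y := by
  unfold catMul
  refine DFinsupp.sum_add_index (fun p => ?_) (fun p a a' => ?_)
  · simp
  · rw [← DFinsupp.sum_add]
    refine Finset.sum_congr rfl fun q _ => ?_
    dsimp only
    split_ifs <;> simp [add_mul]

lemma catMul_add_right (x y y' : CP A) :
    catMul σ α x (y + y') = catMul σ α x y + catMul σ α x y' := by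
  unfold catMul
  rw [← DFinsupp.sum_add]
  refine Finset.sum_congr rfl fun p _ => DFinsupp.sum_add_index (fun q => ?_) (fun q b b' => ?_)
  · simp
  · split_ifs <;> simp [mul_add, add_mul]

lemma catMul_zero_left (y : CP A) : catMul σ α 0 y = 0 := by
  simp [catMul, DFinsupp.sum_zero_index]

lemma catMul_zero_right (x : CP A) : catMul σ α x 0 = 0 := by
  simp [catMul, DFinsupp.sum_zero_index]

lemma catMul_single_single {e f g : G} (s : f ⟶ g) (t : e ⟶ f) (a : A g) (b : A f) :
    catMul σ α (catSingle ⟨f, g, s⟩ a) (catSingle ⟨e, f, t⟩ b) =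
      catSingle ⟨e, g, t ≫ s⟩ (a * σ f g s b * α e f g s t) := by
  simp only [catMul, catSingle, castRH, map_zero, mul_zero, zero_mul, DFinsupp.single_zero,
    dite_eq_ite, ite_self, DFinsupp.sum_single_index, ↓reduceDIte, eqToHom_refl, RingHom.id_apply]
  rw [Category.comp_id]

lemma catMul_single_single_of_ne {e f f' g : G} (s : f' ⟶ g) (t : e ⟶ f) (a : A g) (b : A f)
    (h : f ≠ f') : catMul σ α (catSingle ⟨f', g, s⟩ a) (catSingle ⟨e, f, t⟩ b) = 0 := by
  simp [catMul, catSingle, DFinsupp.sum_single_index, h]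

lemma isCrossedIdeal_of_catMul_single_mem (J : AddSubgroup (CP A))
    (hleft : ∀ p a z, z ∈ J → catMul σ α (catSingle p a) z ∈ J)
    (hright : ∀ p a z, z ∈ J → catMul σ α z (catSingle p a) ∈ J) :
    IsCrossedIdeal σ α (J : Set (CP A)) := by
  refine ⟨J.zero_mem, fun _ _ => J.add_mem, fun _ => J.neg_mem, fun z r hz => ⟨?_, ?_⟩⟩
  · induction r using DFinsupp.induction with
    | h0 => rw [catMul_zero_left]; exact J.zero_mem
    | ha p a r _ _ ih => rw [catMul_add_left]; exact J.add_mem (hleft p a z hz) ih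
  · induction r using DFinsupp.induction with
    | h0 => rw [catMul_zero_right]; exact J.zero_mem
    | ha p a r _ _ ih => rw [catMul_add_right]; exact J.add_mem (hright p a z hz) ih

end Category

section Groupoid

variable {G : Type*} [Groupoid G] {A : G → Type*} [∀ e, Ring (A e)]

lemma comp_mk_injective {e f : G} (u : e ⟶ f) :
    Function.Injective fun n : e ⟶ e => (⟨e, f, n ≫ u⟩ : CMor G) :=
  sigma_mk_injective.comp <| sigma_mk_injective.comp fun _ _ h => (cancel_mono u).1 h

lemma finite_support_comp (z : CP A) {e f : G} (u : e ⟶ f) :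
    (Function.support (M := A f) fun n : e ⟶ e => z ⟨e, f, n ≫ u⟩).Finite :=
  (z.support.finite_toSet.preimage (comp_mk_injective u).injOn).subset
    fun _ hn => DFinsupp.mem_support_iff.2 hn

noncomputable def cosetSum (N : ∀ e : G, Set (e ⟶ e)) {e f : G} (u : e ⟶ f) :
    CP A →+ A f where
  toFun z := ∑ᶠ n ∈ N e, z ⟨e, f, n ≫ u⟩
  map_zero' := by simp
  map_add' y z := finsum_mem_add_distrib' ((finite_support_comp y u).inter_of_right _)
    ((finite_support_comp z u).inter_of_right _)

lemma cosetSum_apply (N : ∀ e : G, Set (e ⟶ e)) {e f : G} (u : e ⟶ f) (z : CP A) :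
    cosetSum N u z = ∑ᶠ n ∈ N e, z ⟨e, f, n ≫ u⟩ := rfl

lemma cosetSum_single (N : ∀ e : G, Set (e ⟶ e)) {e f : G} (w u : e ⟶ f) (c : A f) :
    cosetSum N u (catSingle ⟨e, f, w⟩ c) = if w ≫ Groupoid.inv u ∈ N e then c else 0 := by
  have hw : (w ≫ Groupoid.inv u) ≫ u = w := by simp
  rw [cosetSum_apply, finsum_mem_def, finsum_eq_single _ (w ≫ Groupoid.inv u)]
  · split_ifs with h
    · rw [Set.indicator_of_mem h, hw]; exact DFinsupp.single_eq_same
    · exact Set.indicator_of_notMem h _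
  · intro n hn
    refine Set.indicator_apply_eq_zero.2 fun _ => DFinsupp.single_eq_of_ne fun h => hn ?_
    exact comp_mk_injective u (h.trans (by dsimp only; rw [hw]))

lemma cosetSum_single_of_ne (N : ∀ e : G, Set (e ⟶ e)) {e₁ f₁ e f : G} (w : e₁ ⟶ f₁)
    (u : e ⟶ f) (c : A f₁) (h : ¬(e₁ = e ∧ f₁ = f)) :
    cosetSum N u (catSingle ⟨e₁, f₁, w⟩ c) = 0 :=
  finsum_mem_eq_zero_of_forall_eq_zero fun _ _ => DFinsupp.single_eq_of_ne fun hn =>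
    h ⟨(congrArg Sigma.fst hn).symm, (congrArg (fun p : CMor G => p.2.1) hn).symm⟩

noncomputable def cosetKernel (N : ∀ e : G, Set (e ⟶ e)) : AddSubgroup (CP A) :=
  ⨅ (e : G) (f : G) (u : e ⟶ f), (cosetSum N u).ker

lemma mem_cosetKernel {N : ∀ e : G, Set (e ⟶ e)} {z : CP A} :
    z ∈ cosetKernel N ↔ ∀ (e f : G) (u : e ⟶ f), cosetSum N u z = 0 := by
  simp only [cosetKernel, AddSubgroup.mem_iInf, AddMonoidHom.mem_ker]

lemma cosetSum_of_mem {N : ∀ e : G, Set (e ⟶ e)}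
    (hNmul : ∀ (e : G) (n m : e ⟶ e), n ∈ N e → m ∈ N e → n ≫ m ∈ N e)
    (hNinv : ∀ (e : G) (n : e ⟶ e), n ∈ N e → Groupoid.inv n ∈ N e)
    {e : G} {u : e ⟶ e} (hu : u ∈ N e) (z : CP A) :
    cosetSum N u z = ∑ᶠ n ∈ N e, z ⟨e, e, n⟩ := by
  have hcoset : (· ≫ u) '' N e = N e := by
    refine Set.Subset.antisymm (Set.image_subset_iff.2 fun n hn => hNmul e n u hn hu)
      fun m hm => ⟨m ≫ Groupoid.inv u, hNmul e m _ hm (hNinv e u hu), by simp⟩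
  rw [cosetSum_apply]
  conv_rhs => rw [← hcoset]
  exact (finsum_mem_image (M := A e) (f := fun m => z ⟨e, e, m⟩)
    fun n _ m _ h => (cancel_mono u).1 h).symm

lemma mem_cosetKernel_of_sum_eq_zero {N : ∀ e : G, Set (e ⟶ e)}
    (hNmul : ∀ (e : G) (n m : e ⟶ e), n ∈ N e → m ∈ N e → n ≫ m ∈ N e)
    (hNinv : ∀ (e : G) (n : e ⟶ e), n ∈ N e → Groupoid.inv n ∈ N e) {x : CP A}
    (hsupp : ∀ p : CMor G, x p ≠ 0 → ∃ h : p.1 = p.2.1, p.2.2 ≫ eqToHom h.symm ∈ N p.1)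
    (hsum : ∀ e : G, (∑ᶠ (s : e ⟶ e) (_ : s ∈ N e), x ⟨e, e, s⟩) = 0) :
    x ∈ cosetKernel N := by
  refine mem_cosetKernel.2 fun e f u => ?_
  by_cases hu : ∃ h : e = f, u ≫ eqToHom h.symm ∈ N e
  · obtain ⟨rfl, hu⟩ := hu
    rw [eqToHom_refl, Category.comp_id] at hu
    rw [cosetSum_of_mem hNmul hNinv hu, hsum]
  · refine finsum_mem_eq_zero_of_forall_eq_zero fun n hn => by_contra fun hx => ?_
    obtain ⟨h, hnu⟩ := hsupp _ hx
    dsimp only at h hnu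
    subst h
    refine hu ⟨rfl, ?_⟩
    simpa using hNmul e _ _ (hNinv e n hn) hnu

lemma eq_zero_of_mem_cosetKernel {N : ∀ e : G, Set (e ⟶ e)} (hNone : ∀ e : G, 𝟙 e ∈ N e)
    {y : CP A} (hy : y ∈ cosetKernel N)
    (hy0 : ∀ p : CMor G, (∀ e : G, p ≠ ⟨e, e, 𝟙 e⟩) → y p = 0) : y = 0 := by
  ext p
  by_cases hp : ∃ e, p = ⟨e, e, 𝟙 e⟩
  · obtain ⟨e, rfl⟩ := hp
    have hoff : ∀ n : e ⟶ e, n ≠ 𝟙 e → y ⟨e, e, n ≫ 𝟙 e⟩ = 0 := by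
      intro n hn
      refine hy0 _ fun e' h => ?_
      obtain rfl : e = e' := congrArg Sigma.fst h
      exact hn (by simpa using h)
    have hsum := mem_cosetKernel.1 hy e e (𝟙 e)
    rwa [cosetSum_apply, finsum_mem_def, finsum_eq_single _ (𝟙 e)
      (fun n hn => Set.indicator_apply_eq_zero.2 fun _ => hoff n hn),
      Set.indicator_of_mem (hNone e), Category.comp_id] at hsum
  · exact hy0 p fun e h => hp ⟨e, h⟩

section NormalSubgroupoid

variable (σ : ∀ e f : G, (e ⟶ f) → (A e →+* A f)) (α : ∀ e f g : G, (f ⟶ g) → (e ⟶ f) → A g)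
  (N : ∀ e : G, Set (e ⟶ e))
  (hcoc : ∀ (e f g h : G) (s : g ⟶ h) (t : f ⟶ g) (r : e ⟶ f),
    α f g h s t * α e f h (t ≫ s) r = σ g h s (α e f g t r) * α e g h s (r ≫ t))
  (htw : ∀ (e f g : G) (s : f ⟶ g) (t : e ⟶ f) (a : A e),
    σ f g s (σ e f t a) * α e f g s t = α e f g s t * σ e g (t ≫ s) a)
  (hNnormal : ∀ (e f : G) (s : e ⟶ f),
    (∀ n ∈ N e, ∃ m ∈ N f, n ≫ s = s ≫ m) ∧ (∀ m ∈ N f, ∃ n ∈ N e, s ≫ m = n ≫ s))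
  (hσN : ∀ (e : G) (n : e ⟶ e), n ∈ N e → σ e e n = RingHom.id (A e))
  (hαNl : ∀ (e f : G) (s : e ⟶ f) (n : e ⟶ e), n ∈ N e → α e e f s n = 1)
  (hαNr : ∀ (e f : G) (t : e ⟶ f) (n : f ⟶ f), n ∈ N f → α e f f n t = 1)

include hcoc hαNl in
lemma alpha_snd_mem_comp {e f g : G} (s : f ⟶ g) (t : e ⟶ f) {n : e ⟶ e} (hn : n ∈ N e) :
    α e f g s (n ≫ t) = α e f g s t := by
  simpa [hαNl _ _ _ _ hn] using (hcoc e e f g s t n).symm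

include htw hσN hαNl in
lemma sigma_mem_comp {e f : G} (v : e ⟶ f) {n : e ⟶ e} (hn : n ∈ N e) (b : A e) :
    σ e f (n ≫ v) b = σ e f v b := by
  simpa [hσN _ _ hn, hαNl _ _ _ _ hn] using (htw e e f v n b).symm

include hNnormal in
lemma conj_mem_iff {e f : G} (t : e ⟶ f) (n : f ⟶ f) :
    t ≫ n ≫ Groupoid.inv t ∈ N e ↔ n ∈ N f := by
  constructor
  · intro hm
    obtain ⟨m, hm, hnm⟩ := (hNnormal e f t).1 _ hm
    have hmn : n = m := by simpa using congrArg (Groupoid.inv t ≫ ·) hnm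
    exact hmn ▸ hm
  · intro hn
    obtain ⟨m, hm, hnm⟩ := (hNnormal e f t).2 n hn
    have hmn : t ≫ n ≫ Groupoid.inv t = m := by simpa using congrArg (· ≫ Groupoid.inv t) hnm
    exact hmn ▸ hm

include hcoc hαNl hαNr hNnormal in
lemma alpha_fst_mem_comp {e f g : G} (v : f ⟶ g) (t : e ⟶ f) {n : f ⟶ f} (hn : n ∈ N f) :
    α e f g (n ≫ v) t = α e f g v t := by
  have hconj : t ≫ n = (t ≫ n ≫ Groupoid.inv t) ≫ t := by simp
  have h := hcoc e f f g v n t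
  rw [hαNl _ _ _ _ hn, one_mul, hαNr _ _ _ _ hn, map_one, one_mul, hconj,
    alpha_snd_mem_comp σ α N hcoc hαNl _ _ ((conj_mem_iff N hNnormal t n).2 hn)] at h
  exact h

include hcoc hαNl in
lemma cosetSum_catMul_single_left {e f g : G} (s : f ⟶ g) (a : A g) (u : e ⟶ g) (z : CP A) :
    cosetSum N u (catMul σ α (catSingle ⟨f, g, s⟩ a) z) =
      a * σ f g s (cosetSum N (u ≫ Groupoid.inv s) z) * α e f g s (u ≫ Groupoid.inv s) := by
  induction z using DFinsupp.induction with
  | h0 => simp [catMul_zero_right]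
  | ha q c z _ _ ih =>
    rw [catMul_add_right, map_add, ih, map_add, map_add, mul_add, add_mul]
    congr 1
    obtain ⟨e₁, f₁, τ⟩ := q
    change cosetSum N u (catMul σ α _ (catSingle _ c)) =
      a * σ f g s (cosetSum N _ (catSingle _ c)) * _
    by_cases hf : f₁ = f
    · subst hf
      rw [catMul_single_single]
      by_cases he : e₁ = e
      · subst he
        rw [cosetSum_single, cosetSum_single,
          show τ ≫ Groupoid.inv (u ≫ Groupoid.inv s) = (τ ≫ s) ≫ Groupoid.inv u by simp]
        split_ifs with hn
        · rw [← alpha_snd_mem_comp σ α N hcoc hαNl s (u ≫ Groupoid.inv s) hn]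
          simp
        · simp
      · rw [cosetSum_single_of_ne _ _ _ _ (fun h => he h.1),
          cosetSum_single_of_ne _ _ _ _ (fun h => he h.1)]
        simp
    · rw [catMul_single_single_of_ne _ _ _ _ _ _ hf,
        cosetSum_single_of_ne _ _ _ _ (fun h => hf h.2)]
      simp

lemma cosetSum_catMul_single_left_of_ne {e f g g' : G} (s : f ⟶ g') (a : A g') (u : e ⟶ g)
    (hg : g' ≠ g) (z : CP A) :
    cosetSum N u (catMul σ α (catSingle ⟨f, g', s⟩ a) z) = 0 := by
  induction z using DFinsupp.induction with
  | h0 => simp [catMul_zero_right]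
  | ha q c z _ _ ih =>
    rw [catMul_add_right, map_add, ih, add_zero]
    obtain ⟨e₁, f₁, τ⟩ := q
    change cosetSum N u (catMul σ α _ (catSingle _ c)) = 0
    by_cases hf : f₁ = f
    · subst hf
      rw [catMul_single_single, cosetSum_single_of_ne _ _ _ _ (fun h => hg h.2)]
    · rw [catMul_single_single_of_ne _ _ _ _ _ _ hf, map_zero]

include hcoc htw hσN hαNl hαNr hNnormal in
lemma cosetSum_catMul_single_right {e f₀ f : G} (t : e ⟶ f₀) (b : A f₀) (u : e ⟶ f)
    (z : CP A) :
    cosetSum N u (catMul σ α z (catSingle ⟨e, f₀, t⟩ b)) =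
      cosetSum N (Groupoid.inv t ≫ u) z * σ f₀ f (Groupoid.inv t ≫ u) b *
        α e f₀ f (Groupoid.inv t ≫ u) t := by
  induction z using DFinsupp.induction with
  | h0 => simp [catMul_zero_left]
  | ha q c z _ _ ih =>
    rw [catMul_add_left, map_add, ih, map_add, add_mul, add_mul]
    congr 1
    obtain ⟨f₁, g₁, τ⟩ := q
    change cosetSum N u (catMul σ α (catSingle _ c) _) = cosetSum N _ (catSingle _ c) * _ * _
    by_cases hf : f₀ = f₁
    · subst hf
      rw [catMul_single_single]
      by_cases hg : g₁ = f
      · subst hg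
        rw [cosetSum_single, cosetSum_single,
          show (t ≫ τ) ≫ Groupoid.inv u =
            t ≫ (τ ≫ Groupoid.inv (Groupoid.inv t ≫ u)) ≫ Groupoid.inv t by simp,
          conj_mem_iff N hNnormal]
        split_ifs with hn
        · rw [← sigma_mem_comp σ α N htw hσN hαNl (Groupoid.inv t ≫ u) hn,
            ← alpha_fst_mem_comp σ α N hcoc hNnormal hαNl hαNr (Groupoid.inv t ≫ u) t hn]
          simp
        · simp
      · rw [cosetSum_single_of_ne _ _ _ _ (fun h => hg h.2),
          cosetSum_single_of_ne _ _ _ _ (fun h => hg h.2)]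
        simp
    · rw [catMul_single_single_of_ne _ _ _ _ _ _ hf,
        cosetSum_single_of_ne _ _ _ _ (fun h => hf h.1.symm)]
      simp

lemma cosetSum_catMul_single_right_of_ne {e₀ e f₀ f : G} (t : e₀ ⟶ f₀) (b : A f₀) (u : e ⟶ f)
    (he : e₀ ≠ e) (z : CP A) :
    cosetSum N u (catMul σ α z (catSingle ⟨e₀, f₀, t⟩ b)) = 0 := by
  induction z using DFinsupp.induction with
  | h0 => simp [catMul_zero_left]
  | ha q c z _ _ ih =>
    rw [catMul_add_left, map_add, ih, add_zero]
    obtain ⟨f₁, g₁, τ⟩ := q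
    change cosetSum N u (catMul σ α (catSingle _ c) _) = 0
    by_cases hf : f₀ = f₁
    · subst hf
      rw [catMul_single_single, cosetSum_single_of_ne _ _ _ _ (fun h => he h.1)]
    · rw [catMul_single_single_of_ne _ _ _ _ _ _ hf, map_zero]

include hcoc htw hσN hαNl hαNr hNnormal in
lemma isCrossedIdeal_cosetKernel :
    IsCrossedIdeal σ α ((cosetKernel N : AddSubgroup (CP A)) : Set (CP A)) := by
  refine isCrossedIdeal_of_catMul_single_mem σ α _ (fun ⟨f₀, g, s⟩ a z hz => ?_)
    (fun ⟨e₀, f₀, t⟩ b z hz => ?_) <;>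
  refine mem_cosetKernel.2 fun e f u => ?_ <;> rw [mem_cosetKernel] at hz
  · by_cases hg : g = f
    · subst hg
      rw [cosetSum_catMul_single_left σ α N hcoc hαNl, hz, map_zero, mul_zero, zero_mul]
    · exact cosetSum_catMul_single_left_of_ne σ α N s a u hg z
  · by_cases he : e₀ = e
    · subst he
      rw [cosetSum_catMul_single_right σ α N hcoc htw hNnormal hσN hαNl hαNr, hz, zero_mul,
        zero_mul]
    · exact cosetSum_catMul_single_right_of_ne σ α N t b u he z

end NormalSubgroupoid

end Groupoid
end CategoryCrossedProduct

theorem normal_subgroupoid_ideal_trivial_intersection_general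
    {G : Type*} [Groupoid G] {A : G → Type*} [∀ e, Ring (A e)]
    (σ : ∀ e f : G, (e ⟶ f) → (A e →+* A f))
    (α : ∀ e f g : G, (f ⟶ g) → (e ⟶ f) → A g)
    (hcoc : ∀ (e f g h : G) (s : g ⟶ h) (t : f ⟶ g) (r : e ⟶ f),
      α f g h s t * α e f h (t ≫ s) r = σ g h s (α e f g t r) * α e g h s (r ≫ t))
    (htw : ∀ (e f g : G) (s : f ⟶ g) (t : e ⟶ f) (a : A e),
      σ f g s (σ e f t a) * α e f g s t = α e f g s t * σ e g (t ≫ s) a)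
    (N : ∀ e : G, Set (e ⟶ e))
    (hNone : ∀ e : G, 𝟙 e ∈ N e)
    (hNmul : ∀ (e : G) (n m : e ⟶ e), n ∈ N e → m ∈ N e → n ≫ m ∈ N e)
    (hNinv : ∀ (e : G) (n : e ⟶ e), n ∈ N e → Groupoid.inv n ∈ N e)
    (hNnormal : ∀ (e f : G) (s : e ⟶ f),
      (∀ n ∈ N e, ∃ m ∈ N f, n ≫ s = s ≫ m) ∧
        (∀ m ∈ N f, ∃ n ∈ N e, s ≫ m = n ≫ s))
    (hσN : ∀ (e : G) (n : e ⟶ e), n ∈ N e → σ e e n = RingHom.id (A e))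
    (hαNl : ∀ (e f : G) (s : e ⟶ f) (n : e ⟶ e), n ∈ N e → α e e f s n = 1)
    (hαNr : ∀ (e f : G) (t : e ⟶ f) (n : f ⟶ f), n ∈ N f → α e f f n t = 1)
    (I : Set (CP A)) (x : CP A)
    (hImin : ∀ J : Set (CP A), IsCrossedIdeal σ α J → x ∈ J → I ⊆ J)
    (hsupp : ∀ p : CMor G, x p ≠ 0 →
      ∃ h : p.1 = p.2.1, p.2.2 ≫ eqToHom h.symm ∈ N p.1)
    (hsum : ∀ e : G, (∑ᶠ (s : e ⟶ e) (_ : s ∈ N e), x ⟨e, e, s⟩) = 0) :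
    ∀ y ∈ I, (∀ p : CMor G, (∀ e : G, p ≠ ⟨e, e, 𝟙 e⟩) → y p = 0) → y = 0 := by
  have hI : I ⊆ CategoryCrossedProduct.cosetKernel (A := A) N :=
    hImin _
      (CategoryCrossedProduct.isCrossedIdeal_cosetKernel σ α N hcoc htw hNnormal hσN hαNl hαNr)
      (CategoryCrossedProduct.mem_cosetKernel_of_sum_eq_zero hNmul hNinv hsupp hsum)
  exact fun y hy => CategoryCrossedProduct.eq_zero_of_mem_cosetKernel hNone (hI hy)

/-- let `A ⋊_α^σ G` be a groupoid crossed product with each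
`α(s,t)` central and not a zero divisor, and let `N = ∪_e N_e` be a normal
subgroupoid with `σ_n = id` for `n ∈ N` and `α(s,t) = 1` whenever `s ∈ N` or
`t ∈ N`. If `I` is the twosided ideal generated by an element `Σ a_s u_s` with
`a_s = 0` for `s ∉ ∪_e N_e` and `Σ_{s ∈ N_e} a_s = 0` for every `e`, then
`A ∩ I = {0}`. -/
theorem normal_subgroupoid_ideal_trivial_intersection
    {G : Type*} [Groupoid G] [Finite G] {A : G → Type*} [∀ e, Ring (A e)]
    (σ : ∀ e f : G, (e ⟶ f) → (A e →+* A f))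
    (α : ∀ e f g : G, (f ⟶ g) → (e ⟶ f) → A g)
    (hσ1 : ∀ e : G, σ e e (𝟙 e) = RingHom.id (A e))
    (hα1r : ∀ (e f : G) (s : e ⟶ f), α e e f s (𝟙 e) = 1)
    (hα1l : ∀ (e f : G) (s : e ⟶ f), α e f f (𝟙 f) s = 1)
    (hcoc : ∀ (e f g h : G) (s : g ⟶ h) (t : f ⟶ g) (r : e ⟶ f),
      α f g h s t * α e f h (t ≫ s) r = σ g h s (α e f g t r) * α e g h s (r ≫ t))
    (htw : ∀ (e f g : G) (s : f ⟶ g) (t : e ⟶ f) (a : A e),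
      σ f g s (σ e f t a) * α e f g s t = α e f g s t * σ e g (t ≫ s) a)
    (hcent : ∀ (e f g : G) (s : f ⟶ g) (t : e ⟶ f) (b : A g),
      α e f g s t * b = b * α e f g s t)
    (hreg : ∀ (e f g : G) (s : f ⟶ g) (t : e ⟶ f) (b : A g),
      (α e f g s t * b = 0 → b = 0) ∧ (b * α e f g s t = 0 → b = 0))
    (N : ∀ e : G, Set (e ⟶ e))
    (hNone : ∀ e : G, 𝟙 e ∈ N e)
    (hNmul : ∀ (e : G) (n m : e ⟶ e), n ∈ N e → m ∈ N e → n ≫ m ∈ N e)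
    (hNinv : ∀ (e : G) (n : e ⟶ e), n ∈ N e → Groupoid.inv n ∈ N e)
    (hNnormal : ∀ (e f : G) (s : e ⟶ f),
      (∀ n ∈ N e, ∃ m ∈ N f, n ≫ s = s ≫ m) ∧
        (∀ m ∈ N f, ∃ n ∈ N e, s ≫ m = n ≫ s))
    (hσN : ∀ (e : G) (n : e ⟶ e), n ∈ N e → σ e e n = RingHom.id (A e))
    (hαNl : ∀ (e f : G) (s : e ⟶ f) (n : e ⟶ e), n ∈ N e → α e e f s n = 1)
    (hαNr : ∀ (e f : G) (t : e ⟶ f) (n : f ⟶ f), n ∈ N f → α e f f n t = 1)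
    (I : Set (CP A)) (x : CP A)
    (hI : IsCrossedIdeal σ α I) (hxI : x ∈ I)
    (hImin : ∀ J : Set (CP A), IsCrossedIdeal σ α J → x ∈ J → I ⊆ J)
    (hsupp : ∀ p : CMor G, x p ≠ 0 →
      ∃ h : p.1 = p.2.1, p.2.2 ≫ eqToHom h.symm ∈ N p.1)
    (hsum : ∀ e : G, (∑ᶠ (s : e ⟶ e) (_ : s ∈ N e), x ⟨e, e, s⟩) = 0) :
    ∀ y ∈ I, (∀ p : CMor G, (∀ e : G, p ≠ ⟨e, e, 𝟙 e⟩) → y p = 0) → y = 0 :=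
  normal_subgroupoid_ideal_trivial_intersection_general σ α hcoc htw N hNone hNmul hNinv hNnormal
    hσN hαNl hαNr I x hImin hsupp hsum
end
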